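/- arXiv:1501.03199 — 4 statements merged into one kernel-verified Lean document; each statement's English description precedes it below -/
import Mathlib

section
/- The centralizer in a free group of any non-trivial element is an infinite cyclic group. -/
open FreeGroup in
lemma aux_subsingleton {G : Type*} (x : FreeGroup G) (hx : x ≠ 1)
    (hc : ∀ y : FreeGroup G, Commute x y) (s t : G) : s = t := by
  by_contra hst
  classical
  set w := x.toWord with hwdef
  have hwne : w ≠ [] := by simpa [hwdef, toWord_eq_nil_iff] using hx
  obtain ⟨⟨a, b⟩, w', hw⟩ := List.exists_cons_of_ne_nil hwne
  set c : G := if a = s then t else s with hcdef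
  have hca : c ≠ a := by
    by_cases h : a = s
    · simp [hcdef, h]; exact fun hh => hst hh.symm
    · simp [hcdef, h]; exact fun hh => h hh.symm
  have hred : reduce w = w := reduce_toWord x
  have h1 : (FreeGroup.of c * x).toWord = (c, true) :: w := by
    have : FreeGroup.of c * x = mk ((c, true) :: w) := by
      rw [← mk_toWord (x := x), ← hwdef]
      rfl
    rw [this, toWord_mk, reduce.cons, hred, hw]
    simp [hca]
  have h2 : (x * FreeGroup.of c).toWord = reduce (w ++ [(c, true)]) := by
    have : x * FreeGroup.of c = mk (w ++ [(c, true)]) := by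
      rw [← mk_toWord (x := x), ← hwdef]
      rw [show FreeGroup.of c = mk [(c, true)] from rfl, mul_mk]
    rw [this, toWord_mk]
  have heq : reduce (w ++ [(c, true)]) = (c, true) :: w := by
    rw [← h2, ← h1, (hc (FreeGroup.of c)).eq]
  have hr : Red (w ++ [(c, true)]) ((c, true) :: w) := heq ▸ reduce.red
  have hlen : ((c, true) :: w).length = (w ++ [(c, true)]).length := by simp
  have heq2 : (c, true) :: w = w ++ [(c, true)] := hr.sublist.eq_of_length hlen
  rw [hw] at heq2
  simp only [List.cons_append, List.cons.injEq] at heq2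
  exact hca (congrArg Prod.fst heq2.1)

/-- The centralizer in a free group of any non-trivial element is infinite cyclic. -/
theorem stmt1 {X : Type*} (g : FreeGroup X) (hg : g ≠ 1) :
    Nonempty ((Subgroup.centralizer {g} : Subgroup (FreeGroup X)) ≃* Multiplicative ℤ) := by
  classical
  set C := (Subgroup.centralizer {g} : Subgroup (FreeGroup X)) with hC
  have hgC : g ∈ C := by
    rw [hC, Subgroup.mem_centralizer_iff]
    rintro h rfl; rfl
  haveI : IsFreeGroup C := inferInstance
  set e : FreeGroup (IsFreeGroup.Generators C) ≃* C := IsFreeGroup.mulEquiv C with he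
  set x : FreeGroup (IsFreeGroup.Generators C) := e.symm ⟨g, hgC⟩ with hx
  have hx1 : x ≠ 1 := by
    intro h
    apply hg
    have : e x = 1 := by rw [h, map_one]
    rw [hx, MulEquiv.apply_symm_apply] at this
    exact congrArg Subtype.val this
  have hcom : ∀ y : FreeGroup (IsFreeGroup.Generators C), Commute x y := by
    intro y
    have h1 : (e x : FreeGroup X) = g := by rw [hx, MulEquiv.apply_symm_apply]
    have h2 := Subgroup.mem_centralizer_iff.mp (e y).2
    apply e.injective
    apply Subtype.ext
    rw [map_mul, map_mul]
    show ((e x : FreeGroup X) * e y) = (e y : FreeGroup X) * e x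
    rw [h1]
    exact h2 g rfl
  haveI : Subsingleton (IsFreeGroup.Generators C) :=
    ⟨fun s t => aux_subsingleton x hx1 hcom s t⟩
  -- get an element of Generators C
  have hne : Nonempty (IsFreeGroup.Generators C) := by
    obtain ⟨⟨a, b⟩, _, _⟩ := List.exists_cons_of_ne_nil
      (show x.toWord ≠ [] by simpa [FreeGroup.toWord_eq_nil_iff] using hx1)
    exact ⟨a⟩
  haveI : Unique (IsFreeGroup.Generators C) := ⟨⟨hne.some⟩, fun a => Subsingleton.elim a _⟩
  -- FreeGroup over a Unique type ≃* Multiplicative ℤ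
  set f : FreeGroup (IsFreeGroup.Generators C) →* Multiplicative ℤ :=
    FreeGroup.lift (fun _ => Multiplicative.ofAdd 1) with hf
  set f' : Multiplicative ℤ →* FreeGroup (IsFreeGroup.Generators C) :=
    zpowersHom _ (FreeGroup.of default) with hf'
  have hfe : ∀ z, f (f' z) = z := by
    intro z
    rw [hf', hf]
    simp only [zpowersHom_apply, map_zpow, FreeGroup.lift_apply_of]
    rw [← ofAdd_zsmul]
    simp
  have hef : ∀ u, f' (f u) = u := by
    intro u
    have : f'.comp f = MonoidHom.id _ := by
      apply FreeGroup.ext_hom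
      intro a
      simp [hf, hf', zpowersHom_apply, Subsingleton.elim a default]
    calc f' (f u) = (f'.comp f) u := rfl
    _ = u := by rw [this]; rfl
  have emulZ : FreeGroup (IsFreeGroup.Generators C) ≃* Multiplicative ℤ :=
    { toFun := f, invFun := f', left_inv := hef, right_inv := hfe,
      map_mul' := map_mul f }
  exact ⟨(e.symm).trans emulZ⟩
end

section
/- Let q be an odd prime power and g a non-central diagonal matrix in SL₂(F_q). If g = h² for some h ∈ SL₂(F_q), then g = d² for some diagonal matrix d ∈ D(q). -/
open Matrix

/-- For `q` odd, a non-central diagonal matrix in `SL₂(F_q)` which is a square in `SL₂(F_q)`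
is a square of a diagonal matrix. -/
theorem stmt4 {F : Type*} [Field F] [Fintype F] (hq : Odd (Fintype.card F))
    (g : Matrix.SpecialLinearGroup (Fin 2) F)
    (hdiag : g.1 0 1 = 0 ∧ g.1 1 0 = 0)
    (hnc : g ∉ Subgroup.center (Matrix.SpecialLinearGroup (Fin 2) F))
    (h : Matrix.SpecialLinearGroup (Fin 2) F) (hh : g = h ^ 2) :
    ∃ d : Matrix.SpecialLinearGroup (Fin 2) F,
      (d.1 0 1 = 0 ∧ d.1 1 0 = 0) ∧ g = d ^ 2 := by
  refine ⟨h, ?_, hh⟩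
  have hc : g * h = h * g := by rw [hh]; group
  have hc' : g.1 * h.1 = h.1 * g.1 := by
    have := congrArg Subtype.val hc
    simpa using this
  have hne : g.1 0 0 ≠ g.1 1 1 := by
    intro he
    apply hnc
    have hg : g.1 = g.1 0 0 • (1 : Matrix (Fin 2) (Fin 2) F) := by
      ext i j
      fin_cases i <;> fin_cases j <;>
        simp [hdiag.1, hdiag.2, he]
    rw [Subgroup.mem_center_iff]
    intro k
    apply Subtype.ext
    show k.1 * g.1 = g.1 * k.1
    rw [hg, Matrix.mul_smul, Matrix.smul_mul, Matrix.mul_one, Matrix.one_mul]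
  have e01 := congrFun (congrFun hc' 0) 1
  have e10 := congrFun (congrFun hc' 1) 0
  simp [Matrix.mul_apply, Fin.sum_univ_two, hdiag.1, hdiag.2] at e01 e10
  constructor
  · by_contra hx
    exact hne (mul_right_cancel₀ hx (by linear_combination e01))
  · by_contra hx
    exact hne (mul_right_cancel₀ hx (by linear_combination -e10))
end

section
/- Let q be an odd prime power. The number of elements of SL₂(F_q) that are not squares (i.e., not of the form h² for any h ∈ SL₂(F_q)) is at least (1/4)·|SL₂(F_q)| = (1/4)·(q-1)q(q+1). -/
/-!
For `q` odd, `-1` is a central element of order two in `SL₂(F_q)`, and `(-h)² = h²`. Hence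
squaring factors through the quotient by `{±1}`, so at most half of the group consists of
squares, and at least half (a fortiori a quarter) of it of non-squares. The order of `SL₂(F_q)`
comes from `|GL₂(F_q)| = (q² - 1)(q² - q)` and the surjectivity of `det : GL₂(F_q) → F_qˣ`.
-/

section SquaresModCentral

variable {G : Type*} [Group G]

lemma mul_sq_of_mem_center {g n : G} (hn : n ∈ Subgroup.center G) (hn2 : n ^ 2 = 1) :
    (g * n) ^ 2 = g ^ 2 := by
  rw [(show Commute g n from Subgroup.mem_center_iff.mp hn g).mul_pow, hn2, mul_one]

theorem card_mul_ncard_squares_le [Finite G] (N : Subgroup G) (hN : N ≤ Subgroup.center G)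
    (hN2 : ∀ n ∈ N, n ^ 2 = 1) :
    Nat.card N * {g : G | ∃ h, g = h ^ 2}.ncard ≤ Nat.card G := by
  let sq : G ⧸ N → G := Quotient.lift (s := QuotientGroup.leftRel N) (· ^ 2) fun a b hab => by
    replace hab : a⁻¹ * b ∈ N := QuotientGroup.leftRel_apply.mp hab
    rw [show b = a * (a⁻¹ * b) by group, mul_sq_of_mem_center (hN hab) (hN2 _ hab)]
  have hrange : {g : G | ∃ h, g = h ^ 2} = Set.range sq := by
    ext g
    constructor
    · rintro ⟨h, rfl⟩
      exact ⟨h, rfl⟩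
    · rintro ⟨x, rfl⟩
      induction x using QuotientGroup.induction_on with
      | H h => exact ⟨h, rfl⟩
  rw [hrange, ← Nat.card_coe_set_eq, N.card_eq_card_quotient_mul_card_subgroup, mul_comm]
  exact Nat.mul_le_mul_right _ (Finite.card_range_le sq)

theorem two_mul_ncard_squares_le [Finite G] {z : G} (hz : z ∈ Subgroup.center G)
    (hz2 : z ^ 2 = 1) (hz1 : z ≠ 1) :
    2 * {g : G | ∃ h, g = h ^ 2}.ncard ≤ Nat.card G := by
  have hcard : Nat.card (Subgroup.zpowers z) = 2 := by
    rw [Nat.card_zpowers, orderOf_eq_prime hz2 hz1]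
  refine hcard ▸ card_mul_ncard_squares_le _ (Subgroup.zpowers_le.mpr hz) ?_
  rintro _ ⟨k, rfl⟩
  rw [← zpow_natCast, ← zpow_mul, mul_comm, zpow_mul, zpow_natCast, hz2, one_zpow]

end SquaresModCentral

namespace Matrix.SpecialLinearGroup

variable {n R : Type*} [Fintype n] [DecidableEq n] [CommRing R]

lemma neg_one_mem_center [Fact (Even (Fintype.card n))] :
    (-1 : SpecialLinearGroup n R) ∈ Subgroup.center (SpecialLinearGroup n R) :=
  Subgroup.mem_center_iff.mpr fun g => by rw [mul_neg_one, neg_one_mul]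

lemma neg_one_ne_one [Fact (Even (Fintype.card n))] [Nonempty n] [Nontrivial R]
    (hR : ringChar R ≠ 2) : (-1 : SpecialLinearGroup n R) ≠ 1 := by
  intro h
  obtain ⟨i⟩ := ‹Nonempty n›
  have := congrArg (fun g : SpecialLinearGroup n R => (g : Matrix n n R) i i) h
  simp only [coe_neg, coe_one, neg_apply, one_apply_eq] at this
  exact Ring.neg_one_ne_one_of_char_ne_two hR this

lemma ker_det_eq_range_toGL :
    (GeneralLinearGroup.det : GL n R →* Rˣ).ker =
      (toGL : SpecialLinearGroup n R →* GL n R).range := by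
  ext A
  rw [MonoidHom.mem_ker, MonoidHom.mem_range]
  constructor
  · intro hA
    refine ⟨⟨A, ?_⟩, ?_⟩
    · simpa using congrArg Units.val hA
    · ext; rfl
  · rintro ⟨g, rfl⟩
    ext
    simp

theorem card_mul_card_units [Finite R] [Nonempty n] :
    Nat.card (SpecialLinearGroup n R) * Nat.card Rˣ = Nat.card (GL n R) := by
  rw [(GeneralLinearGroup.det : GL n R →* Rˣ).ker.card_eq_card_quotient_mul_card_subgroup,
    Nat.card_congr (QuotientGroup.quotientKerEquivOfSurjective _
      GeneralLinearGroup.det_surjective).toEquiv, ker_det_eq_range_toGL,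
    ← Nat.card_congr (MonoidHom.ofInjective toGL_injective).toEquiv, mul_comm]

theorem card_fin_two_field {F : Type*} [Field F] [Fintype F] :
    Nat.card (SpecialLinearGroup (Fin 2) F) =
      (Fintype.card F - 1) * Fintype.card F * (Fintype.card F + 1) := by
  have h := card_mul_card_units (n := Fin 2) (R := F)
  rw [card_GL_field, Fin.prod_univ_two, Nat.card_units, Nat.card_eq_fintype_card (α := F)] at h
  obtain ⟨a, ha⟩ : ∃ a, Fintype.card F = a + 1 :=
    ⟨_, (Nat.succ_pred_eq_of_pos Fintype.card_pos).symm⟩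
  rw [ha, Nat.add_sub_cancel] at h ⊢
  simp only [Fin.val_zero, Fin.val_one, pow_zero, pow_one] at h
  have hpos : 0 < a := by have := Fintype.one_lt_card (α := F); omega
  refine Nat.eq_of_mul_eq_mul_right hpos (h.trans ?_)
  rw [Nat.sub_eq_of_eq_add (by ring : (a + 1) ^ 2 = a * (a + 2) + 1),
    Nat.sub_eq_of_eq_add (by ring : (a + 1) ^ 2 = a * (a + 1) + (a + 1))]
  ring

end Matrix.SpecialLinearGroup

/-- For `q` odd, at least a quarter of the elements of `SL₂(F_q)` are non-squares. -/
theorem stmt5 {F : Type*} [Field F] [Fintype F] (hq : Odd (Fintype.card F)) :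
    (Fintype.card F - 1) * Fintype.card F * (Fintype.card F + 1) ≤
      4 * ({g : Matrix.SpecialLinearGroup (Fin 2) F |
        ¬ ∃ h : Matrix.SpecialLinearGroup (Fin 2) F, g = h ^ 2}).ncard := by
  have hchar : ringChar F ≠ 2 := fun h =>
    Nat.not_even_iff_odd.mpr hq (Nat.even_iff.mpr (FiniteField.even_card_iff_char_two.mp h))
  have hsquares : 2 * {g : Matrix.SpecialLinearGroup (Fin 2) F | ∃ h, g = h ^ 2}.ncard ≤
      Nat.card (Matrix.SpecialLinearGroup (Fin 2) F) :=
    two_mul_ncard_squares_le Matrix.SpecialLinearGroup.neg_one_mem_center neg_one_sq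
      (Matrix.SpecialLinearGroup.neg_one_ne_one hchar)
  have hsplit := Set.ncard_add_ncard_compl
    {g : Matrix.SpecialLinearGroup (Fin 2) F | ∃ h, g = h ^ 2}
  rw [Set.compl_ofPred, Matrix.SpecialLinearGroup.card_fin_two_field] at hsplit
  rw [Matrix.SpecialLinearGroup.card_fin_two_field] at hsquares
  omega
end

section
/- Let G be a finite group, S ⊆ G a symmetric subset, and H ≤ G a subgroup. For a probability measure given by the l-fold convolution μ_S^(l) of the uniform measure on S, the quantity μ_S^(2l)(H) equals the squared l²-norm of the pushforward of μ_S^(l) to the coset space G/H; consequently μ_S^(2l)(H) is a non-increasing function of l. -/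
open scoped Classical

variable {G : Type*} [Group G] [Fintype G]

/-- Convolution of two functionals on a finite group. -/
noncomputable def conv (φ ψ : G → ℝ) : G → ℝ := fun g => ∑ h : G, φ h * ψ (h⁻¹ * g)

/-- The uniform probability measure on a finite subset `S` of `G`. -/
noncomputable def unifMeas (S : Finset G) : G → ℝ :=
  fun g => if g ∈ S then ((S.card : ℝ))⁻¹ else 0

/-- The `l`-fold convolution power `μ_S^(l)`. -/
noncomputable def convPow (S : Finset G) : ℕ → G → ℝ
  | 0 => fun g => if g = 1 then 1 else 0
  | (l + 1) => conv (convPow S l) (unifMeas S)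

lemma conv_assoc (φ ψ χ : G → ℝ) : conv (conv φ ψ) χ = conv φ (conv ψ χ) := by
  funext g
  simp only [conv, Finset.sum_mul, Finset.mul_sum]
  rw [Finset.sum_comm]
  refine Finset.sum_congr rfl fun k _ => ?_
  refine (Fintype.sum_equiv (Equiv.mulLeft k) _ _ fun m => ?_).symm
  simp only [Equiv.coe_mulLeft, inv_mul_cancel_left, mul_inv_rev, mul_assoc]

lemma conv_deltaR (S : Finset G) (φ : G → ℝ) : conv φ (convPow S 0) = φ := by
  funext g
  simp only [conv, convPow, inv_mul_eq_one, mul_ite, mul_one, mul_zero]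
  simp

lemma deltaL_conv (S : Finset G) (φ : G → ℝ) : conv (convPow S 0) φ = φ := by
  funext g
  simp only [conv, convPow, ite_mul, one_mul, zero_mul]
  simp

lemma convPow_add (S : Finset G) (a b : ℕ) :
    convPow S (a + b) = conv (convPow S a) (convPow S b) := by
  induction b with
  | zero => simp [conv_deltaR]
  | succ b ih =>
      show convPow S ((a + b) + 1) = _
      rw [show convPow S ((a+b)+1) = conv (convPow S (a+b)) (unifMeas S) from rfl, ih,
        conv_assoc]
      rfl

lemma convPow_one (S : Finset G) : convPow S 1 = unifMeas S := by
  rw [show convPow S 1 = conv (convPow S 0) (unifMeas S) from rfl, deltaL_conv]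

lemma convPow_succ' (S : Finset G) (l : ℕ) :
    convPow S (l + 1) = conv (unifMeas S) (convPow S l) := by
  rw [← convPow_one S, ← convPow_add, add_comm]

set_option linter.unusedSectionVars false in
lemma unifMeas_symm (S : Finset G) (hsym : ∀ s ∈ S, s⁻¹ ∈ S) (g : G) :
    unifMeas S g⁻¹ = unifMeas S g := by
  unfold unifMeas
  have : g⁻¹ ∈ S ↔ g ∈ S := ⟨fun h => by simpa using hsym _ h, fun h => hsym _ h⟩
  simp [this]

lemma convPow_symm (S : Finset G) (hsym : ∀ s ∈ S, s⁻¹ ∈ S) (l : ℕ) (g : G) :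
    convPow S l g⁻¹ = convPow S l g := by
  induction l generalizing g with
  | zero => simp [convPow, inv_eq_one]
  | succ l ih =>
      have hR : convPow S (l + 1) g =
          ∑ k : G, unifMeas S k * convPow S l (k⁻¹ * g) := by
        rw [convPow_succ']; rfl
      rw [hR]
      calc convPow S (l + 1) g⁻¹
          = ∑ h : G, convPow S l h * unifMeas S (h⁻¹ * g⁻¹) := rfl
        _ = ∑ h : G, convPow S l h * unifMeas S (g * h) := by
            refine Finset.sum_congr rfl fun h _ => ?_
            rw [← unifMeas_symm S hsym (g * h), mul_inv_rev]
        _ = ∑ k : G, convPow S l (g⁻¹ * k) * unifMeas S k := by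
            refine Fintype.sum_equiv (Equiv.mulLeft g) _ _ fun h => ?_
            simp
        _ = ∑ k : G, unifMeas S k * convPow S l (k⁻¹ * g) := by
            refine Finset.sum_congr rfl fun k _ => ?_
            rw [← ih (g⁻¹ * k), mul_inv_rev, inv_inv, mul_comm]

/-- The pushforward of `convPow S l` to `G ⧸ H`. -/
noncomputable def pushF (S : Finset G) (H : Subgroup G) (l : ℕ) (x : G ⧸ H) : ℝ :=
  ∑ g ∈ Finset.univ.filter (fun g : G => QuotientGroup.mk g = x), convPow S l g

lemma pushF_eq (S : Finset G) (H : Subgroup G) (l : ℕ) (g : G) :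
    pushF S H l (QuotientGroup.mk g) = ∑ h : H, convPow S l (g * h) := by
  unfold pushF
  rw [show (∑ h : H, convPow S l (g * h)) =
      ∑ k ∈ Finset.univ.filter (fun k : G => k ∈ H), convPow S l (g * k) from
    (Finset.sum_subtype (Finset.univ.filter (fun k : G => k ∈ H)) (fun x => by simp) (fun k => convPow S l (g * k))).symm]
  refine Finset.sum_nbij' (fun g₂ => g⁻¹ * g₂) (fun k => g * k) ?_ ?_ ?_ ?_ ?_
  · intro a ha
    simp only [Finset.mem_filter, Finset.mem_univ, true_and] at ha ⊢
    exact (QuotientGroup.eq).1 ha.symm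
  · intro a ha
    simp only [Finset.mem_filter, Finset.mem_univ, true_and] at ha ⊢
    rw [QuotientGroup.eq]
    simpa using ha
  · intro a _; simp
  · intro a _; simp
  · intro a _; simp

-- key equality
lemma key_eq (S : Finset G) (hsym : ∀ s ∈ S, s⁻¹ ∈ S) (H : Subgroup G) (l : ℕ) :
    ∑ h : H, convPow S (2 * l) (h : G) = ∑ x : G ⧸ H, (pushF S H l x) ^ 2 := by
  have h2l : convPow S (2 * l) = conv (convPow S l) (convPow S l) := by
    rw [two_mul, convPow_add]
  calc ∑ h : H, convPow S (2 * l) (h : G)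
      = ∑ h : H, ∑ g : G, convPow S l g * convPow S l (g⁻¹ * h) := by
        simp [h2l, conv]
    _ = ∑ h : H, ∑ g : G, convPow S l g * convPow S l (g * h) := by
        refine Finset.sum_congr rfl fun h _ => ?_
        refine Fintype.sum_equiv (Equiv.inv G) _ _ fun g => ?_
        simp only [Equiv.inv_apply, inv_inv]
        rw [convPow_symm S hsym l g]
    _ = ∑ g : G, convPow S l g * ∑ h : H, convPow S l (g * h) := by
        rw [Finset.sum_comm]; simp [Finset.mul_sum]
    _ = ∑ g : G, convPow S l g * pushF S H l (QuotientGroup.mk g) := by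
        simp [pushF_eq]
    _ = ∑ x : G ⧸ H, ∑ g ∈ Finset.univ.filter (fun g : G => QuotientGroup.mk g = x),
          convPow S l g * pushF S H l x := by
        rw [← Finset.sum_fiberwise Finset.univ (fun g : G => (QuotientGroup.mk g : G ⧸ H))
          (fun g => convPow S l g * pushF S H l (QuotientGroup.mk g))]
        refine Finset.sum_congr rfl fun x _ => Finset.sum_congr rfl fun g hg => ?_
        rw [(Finset.mem_filter.1 hg).2]
    _ = ∑ x : G ⧸ H, (pushF S H l x) ^ 2 := by
        refine Finset.sum_congr rfl fun x _ => ?_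
        rw [← Finset.sum_mul, sq]
        rfl

lemma pushF_succ (S : Finset G) (H : Subgroup G) (l : ℕ) (x : G ⧸ H) :
    pushF S H (l + 1) x = (S.card : ℝ)⁻¹ * ∑ s ∈ S, pushF S H l ((s⁻¹ : G) • x) := by
  induction x using QuotientGroup.induction_on with
  | H g =>
  rw [pushF_eq]
  have key : ∀ h : H, convPow S (l+1) (g * h)
      = ∑ s ∈ S, (S.card : ℝ)⁻¹ * convPow S l (s⁻¹ * (g * h)) := by
    intro h
    have hmem := Finset.sum_ite_mem Finset.univ S
      (fun s : G => (S.card : ℝ)⁻¹ * convPow S l (s⁻¹ * (g * h)))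
    rw [Finset.univ_inter] at hmem
    rw [convPow_succ', ← hmem]
    show ∑ k : G, unifMeas S k * convPow S l (k⁻¹ * (g * h)) = _
    refine Finset.sum_congr rfl fun k _ => ?_
    simp [unifMeas, ite_mul]
  simp_rw [key]
  rw [Finset.sum_comm]
  rw [Finset.mul_sum]
  refine Finset.sum_congr rfl fun s hs => ?_
  rw [← Finset.mul_sum]
  congr 1
  have hx : (s⁻¹ : G) • (QuotientGroup.mk g : G ⧸ H) = QuotientGroup.mk (s⁻¹ * g) := rfl
  rw [hx, pushF_eq]
  refine Finset.sum_congr rfl fun h _ => ?_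
  rw [mul_assoc]

lemma pushF_sq_mono (S : Finset G) (hS : S.Nonempty) (H : Subgroup G) (l : ℕ) :
    ∑ x : G ⧸ H, (pushF S H (l + 1) x) ^ 2 ≤ ∑ x : G ⧸ H, (pushF S H l x) ^ 2 := by
  have hcard : (0 : ℝ) < (S.card : ℝ) := by
    exact_mod_cast Finset.card_pos.2 hS
  have step1 : ∀ x : G ⧸ H, (pushF S H (l + 1) x) ^ 2 ≤
      (S.card : ℝ)⁻¹ * ∑ s ∈ S, (pushF S H l ((s⁻¹ : G) • x)) ^ 2 := by
    intro x
    rw [pushF_succ, mul_pow]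
    have hcs := sq_sum_le_card_mul_sum_sq (s := S)
      (f := fun s => pushF S H l ((s⁻¹ : G) • x))
    calc ((S.card : ℝ)⁻¹) ^ 2 * (∑ s ∈ S, pushF S H l ((s⁻¹ : G) • x)) ^ 2
        ≤ ((S.card : ℝ)⁻¹) ^ 2 * ((S.card : ℝ) * ∑ s ∈ S, (pushF S H l ((s⁻¹ : G) • x)) ^ 2) := by
          apply mul_le_mul_of_nonneg_left hcs (by positivity)
      _ = (S.card : ℝ)⁻¹ * ∑ s ∈ S, (pushF S H l ((s⁻¹ : G) • x)) ^ 2 := by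
          field_simp
  calc ∑ x : G ⧸ H, (pushF S H (l + 1) x) ^ 2
      ≤ ∑ x : G ⧸ H, (S.card : ℝ)⁻¹ * ∑ s ∈ S, (pushF S H l ((s⁻¹ : G) • x)) ^ 2 :=
        Finset.sum_le_sum fun x _ => step1 x
    _ = (S.card : ℝ)⁻¹ * ∑ s ∈ S, ∑ x : G ⧸ H, (pushF S H l ((s⁻¹ : G) • x)) ^ 2 := by
        rw [← Finset.mul_sum, Finset.sum_comm]
    _ = (S.card : ℝ)⁻¹ * ∑ s ∈ S, ∑ x : G ⧸ H, (pushF S H l x) ^ 2 := by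
        congr 1
        refine Finset.sum_congr rfl fun s _ => ?_
        exact Fintype.sum_equiv (MulAction.toPerm ((s⁻¹ : G))) _ _ fun x => rfl
    _ = ∑ x : G ⧸ H, (pushF S H l x) ^ 2 := by
        rw [Finset.sum_const, nsmul_eq_mul, ← mul_assoc, inv_mul_cancel₀ hcard.ne', one_mul]

/-- For `S` symmetric, `μ_S^(2l)(H)` equals the squared `l²`-norm of the pushforward of
`μ_S^(l)` to the coset space `G/H` (where `φ̄(gH) = ∑_{h ∈ H} φ(gh)`), and consequently
`l ↦ μ_S^(2l)(H)` is non-increasing. -/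
theorem stmt12 (S : Finset G) (hS : S.Nonempty) (hsym : ∀ s ∈ S, s⁻¹ ∈ S) (H : Subgroup G) :
    (∀ l : ℕ, ∑ h : H, convPow S (2 * l) (h : G) =
      ∑ x : G ⧸ H,
        (∑ g ∈ Finset.univ.filter (fun g : G => QuotientGroup.mk g = x),
          convPow S l g) ^ 2) ∧
    Antitone (fun l : ℕ => ∑ h : H, convPow S (2 * l) (h : G)) := by
  constructor
  · intro l
    exact key_eq S hsym H l
  · apply antitone_nat_of_succ_le
    intro l
    rw [key_eq S hsym H l, key_eq S hsym H (l + 1)]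
    exact pushF_sq_mono S hS H l
end
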